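/- arXiv:2204.02456 — 2 statements merged into one kernel-verified Lean document; each statement's English description precedes it below -/
import Mathlib

section
/- In the free group on two generators r and t, for any positive integers q and k with k ≠ q!, the word w = u t^k u t^{-k} u^{-1} t^k u^{-1} t^{-k}, where u = t^{q!} r t^{q!} r^{-1} t^{-q!} r t^{-q!} r^{-1}, is a nontrivial element (its reduced form is nonempty). -/
namespace RelWordAux

open FreeGroup List

/-- The non-cancellation relation on letters. -/
def Rel (x y : Bool × Bool) : Prop := ¬(x.1 = y.1 ∧ x.2 = !y.2)

lemma Rel_self (x : Bool × Bool) : Rel x x := by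
  rintro ⟨-, h⟩; simp at h

/-- Turn a list of blocks (multiplicity, letter) into a word. -/
def blk : List (ℕ × (Bool × Bool)) → List (Bool × Bool)
  | [] => []
  | p :: bs => List.replicate p.1 p.2 ++ blk bs

lemma head?_replicate_append {x : Bool × Bool} {l : List (Bool × Bool)} {m : ℕ} (hm : 0 < m) :
    (List.replicate m x ++ l).head? = some x := by
  cases m with
  | zero => omega
  | succ m => simp [List.replicate_succ]

lemma chain'_replicate_append (m : ℕ) (x : Bool × Bool) (l : List (Bool × Bool))
    (hl : List.Chain' Rel l) (hx : ∀ y ∈ l.head?, Rel x y) :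
    List.Chain' Rel (List.replicate m x ++ l) := by
  induction m with
  | zero => simpa
  | succ m ih =>
    rw [List.replicate_succ, List.cons_append]
    refine List.isChain_cons.2 ⟨?_, ih⟩
    intro y hy
    cases m with
    | zero => simp at hy ⊢; exact hx _ (by simpa using hy)
    | succ m =>
      rw [head?_replicate_append (by omega)] at hy
      cases hy
      exact Rel_self x

lemma chain'_blk : ∀ bs : List (ℕ × (Bool × Bool)), (∀ p ∈ bs, 0 < p.1) →
    List.Chain' (fun p q : ℕ × (Bool × Bool) => Rel p.2 q.2) bs →
    List.Chain' Rel (blk bs)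
  | [], _, _ => by simp [List.Chain', blk]
  | p :: bs, hpos, hch => by
    rw [blk]
    refine chain'_replicate_append _ _ _
      (chain'_blk bs (fun q hq => hpos q (List.mem_cons_of_mem _ hq)) hch.tail) ?_
    intro y hy
    cases bs with
    | nil => simp [blk] at hy
    | cons q bs =>
      rw [blk, head?_replicate_append (hpos q (by simp))] at hy
      cases hy
      exact (List.isChain_cons_cons.1 hch).1

lemma reduce_eq_self_of_chain' : ∀ {L : List (Bool × Bool)}, List.Chain' Rel L →
    FreeGroup.reduce L = L
  | [], _ => rfl
  | x :: L, h => by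
    rw [FreeGroup.reduce.cons, reduce_eq_self_of_chain' (List.isChain_cons.1 h).2]
    cases L with
    | nil => rfl
    | cons hd tl =>
      have := (List.isChain_cons_cons.1 h).1
      simp only [Rel] at this
      exact if_neg this

lemma mk_rep_t (a : Bool) (m : ℕ) :
    FreeGroup.mk (List.replicate m (a, true)) = FreeGroup.of a ^ m := by
  rw [← FreeGroup.toWord_of_pow, FreeGroup.mk_toWord]

lemma mk_rep_f (a : Bool) (m : ℕ) :
    FreeGroup.mk (List.replicate m (a, false)) = (FreeGroup.of a ^ m)⁻¹ := by
  have h : ((FreeGroup.of a ^ m)⁻¹).toWord = List.replicate m (a, false) := by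
    rw [FreeGroup.toWord_inv, FreeGroup.toWord_of_pow, FreeGroup.invRev]
    simp
  rw [← h, FreeGroup.mk_toWord]

/-- Blocks for the word `u = tⁿ r tⁿ r⁻¹ t⁻ⁿ r t⁻ⁿ r⁻¹`. -/
def Ub (n : ℕ) : List (ℕ × (Bool × Bool)) :=
  [(n, (false, true)), (1, (true, true)), (n, (false, true)), (1, (true, false)),
   (n, (false, false)), (1, (true, true)), (n, (false, false)), (1, (true, false))]

/-- Blocks for the word `v = r tⁿ r⁻¹ tⁿ r t⁻ⁿ r⁻¹`. -/
def Vb (n : ℕ) : List (ℕ × (Bool × Bool)) :=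
  [(1, (true, true)), (n, (false, true)), (1, (true, false)), (n, (false, true)),
   (1, (true, true)), (n, (false, false)), (1, (true, false))]

end RelWordAux

open RelWordAux in
/-- Nontriviality of the relation word when `k ≠ q!`. -/
theorem relation_word_nontrivial (q k : ℕ) (hq : 0 < q) (hk : 0 < k)
    (hkq : k ≠ Nat.factorial q) :
    let r : FreeGroup Bool := FreeGroup.of true
    let t : FreeGroup Bool := FreeGroup.of false
    let u : FreeGroup Bool :=
      t ^ Nat.factorial q * r * t ^ Nat.factorial q * r⁻¹ *
        (t ^ Nat.factorial q)⁻¹ * r * (t ^ Nat.factorial q)⁻¹ * r⁻¹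
    u * t ^ k * u * (t ^ k)⁻¹ * u⁻¹ * t ^ k * u⁻¹ * (t ^ k)⁻¹ ≠ 1 := by
  intro r t u
  set n := Nat.factorial q with hn
  have hn0 : 0 < n := q.factorial_pos
  have hr : r = FreeGroup.of true := rfl
  have ht : t = FreeGroup.of false := rfl
  have hu : u = t ^ n * r * t ^ n * r⁻¹ * (t ^ n)⁻¹ * r * (t ^ n)⁻¹ * r⁻¹ := rfl
  set v : FreeGroup Bool := r * t ^ n * r⁻¹ * t ^ n * r * (t ^ n)⁻¹ * r⁻¹ with hv
  have hu' : u⁻¹ = v * (t ^ n)⁻¹ := by rw [hu, hv]; group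
  have key : ∀ m : ℕ, 0 < m → ∀ s : ℕ × (Bool × Bool),
      (s = (m, (false, true)) ∨ s = (m, (false, false))) →
      u⁻¹ * t ^ k = v * FreeGroup.mk (List.replicate s.1 s.2) →
      u * t ^ k * u * (t ^ k)⁻¹ * u⁻¹ * t ^ k * u⁻¹ * (t ^ k)⁻¹ ≠ 1 := by
    intro m hm s hs hsplit h1
    set bs : List (ℕ × (Bool × Bool)) :=
      Ub n ++ [(k, (false, true))] ++ Ub n ++ [(k, (false, false))] ++ Vb n ++ [s]
        ++ (Vb n ++ [(n, (false, false))]) ++ [(k, (false, false))] with hbs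
    have hw : u * t ^ k * u * (t ^ k)⁻¹ * u⁻¹ * t ^ k * u⁻¹ * (t ^ k)⁻¹
        = FreeGroup.mk (blk bs) := by
      have step : u * t ^ k * u * (t ^ k)⁻¹ * u⁻¹ * t ^ k * u⁻¹ * (t ^ k)⁻¹
          = u * t ^ k * u * (t ^ k)⁻¹ * (u⁻¹ * t ^ k) * u⁻¹ * (t ^ k)⁻¹ := by group
      rw [step, hsplit, hu', hu, hv, hr, ht, hbs]
      simp only [Ub, Vb, blk, List.cons_append, List.nil_append, List.append_nil,
        ← FreeGroup.mul_mk, mk_rep_t, mk_rep_f]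
      group
    have hchain : List.Chain' Rel (blk bs) := by
      apply chain'_blk
      · intro p hp
        rw [hbs] at hp
        simp only [Ub, Vb, List.mem_append, List.mem_cons, List.mem_singleton,
          List.not_mem_nil, or_false] at hp
        rcases hs with rfl | rfl <;>
          rcases hp with (((((((hp|hp|hp|hp|hp|hp|hp|hp)|hp)|hp|hp|hp|hp|hp|hp|hp|hp)|hp)|hp|hp|hp|hp|hp|hp|hp)|hp)|(hp|hp|hp|hp|hp|hp|hp)|hp)|hp <;>
          subst hp <;> simp <;> omega
      · rw [hbs]
        simp only [Ub, Vb, List.cons_append, List.nil_append, List.append_nil]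
        rcases hs with rfl | rfl <;>
          simp [List.Chain', List.isChain_cons_cons, RelWordAux.Rel]
    have hred : FreeGroup.reduce (blk bs) = blk bs := reduce_eq_self_of_chain' hchain
    have h2 : (FreeGroup.mk (blk bs)).toWord = [] := by
      rw [← hw, h1]; exact FreeGroup.toWord_one
    rw [FreeGroup.toWord_mk, hred, hbs] at h2
    simp [Ub, Vb, blk, List.append_eq_nil_iff] at h2
  rcases Nat.lt_or_ge k n with hkn | hkn
  · refine key (n - k) (by omega) ((n - k, (false, false))) (Or.inr rfl) ?_
    have h1 : (t : FreeGroup Bool) ^ (n - k) * t ^ k = t ^ n := by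
      rw [← pow_add]; congr 1; omega
    rw [hu', mk_rep_f, ht, ← h1, ht]
    group
  · have hkn' : n < k := lt_of_le_of_ne hkn (fun h => hkq h.symm)
    refine key (k - n) (by omega) ((k - n, (false, true))) (Or.inl rfl) ?_
    have h1 : (t : FreeGroup Bool) ^ n * t ^ (k - n) = t ^ k := by
      rw [← pow_add]; congr 1; omega
    rw [hu', mk_rep_t, ht, ← h1, ht]
    group
end

section
/- In the free group on two generators r and t, for any positive integer q, setting k = q! and u = t^{q!} r t^{q!} r^{-1} t^{-q!} r t^{-q!} r^{-1}, the word w = u t^k u t^{-k} u^{-1} t^k u^{-1} t^{-k} is a nontrivial element of the free group. -/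
/-- Sanov matrix `R = [[1,0],[2,1]]` as an element of `SL(2,ℤ)`. -/
def sanovR : Matrix.SpecialLinearGroup (Fin 2) ℤ :=
  ⟨!![1, 0; 2, 1], by norm_num [Matrix.det_fin_two_of]⟩

/-- Sanov matrix `T = [[1,2],[0,1]]` as an element of `SL(2,ℤ)`. -/
def sanovT : Matrix.SpecialLinearGroup (Fin 2) ℤ :=
  ⟨!![1, 2; 0, 1], by norm_num [Matrix.det_fin_two_of]⟩

@[simp] lemma sanovR_coe : (↑sanovR : Matrix (Fin 2) (Fin 2) ℤ) = !![1, 0; 2, 1] := rfl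
@[simp] lemma sanovT_coe : (↑sanovT : Matrix (Fin 2) (Fin 2) ℤ) = !![1, 2; 0, 1] := rfl

/-- The Sanov representation of the free group on two generators. -/
def sanov : FreeGroup Bool →* Matrix.SpecialLinearGroup (Fin 2) ℤ :=
  FreeGroup.lift (fun b => if b then sanovR else sanovT)

@[simp] lemma sanov_r : sanov (FreeGroup.of true) = sanovR := by simp [sanov]
@[simp] lemma sanov_t : sanov (FreeGroup.of false) = sanovT := by simp [sanov]

lemma Tpow (n : ℕ) :
    (!![1, 2; 0, 1] : Matrix (Fin 2) (Fin 2) ℤ) ^ n = !![1, 2 * (n : ℤ); 0, 1] := by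
  induction n with
  | zero => simp [Matrix.one_fin_two]
  | succ n ih =>
    rw [pow_succ, ih, Matrix.mul_fin_two]
    ext i j
    fin_cases i <;> fin_cases j <;> simp <;> push_cast <;> ring

/-- Nontriviality of the relation word in the special case `k = q!`. -/
theorem relation_word_nontrivial_special (q : ℕ) (hq : 0 < q) :
    let k : ℕ := Nat.factorial q
    let r : FreeGroup Bool := FreeGroup.of true
    let t : FreeGroup Bool := FreeGroup.of false
    let u : FreeGroup Bool :=
      t ^ Nat.factorial q * r * t ^ Nat.factorial q * r⁻¹ *
        (t ^ Nat.factorial q)⁻¹ * r * (t ^ Nat.factorial q)⁻¹ * r⁻¹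
    u * t ^ k * u * (t ^ k)⁻¹ * u⁻¹ * t ^ k * u⁻¹ * (t ^ k)⁻¹ ≠ 1 := by
  intro k r t u hw
  set n : ℕ := Nat.factorial q with hn
  have hm : (1 : ℤ) ≤ (n : ℤ) := by
    have := Nat.factorial_pos q
    omega
  -- image of u under the Sanov representation
  have hU : (↑(sanov u) : Matrix (Fin 2) (Fin 2) ℤ)
      = !![1 - 16*(n:ℤ)^2 + 64*(n:ℤ)^3 + 256*(n:ℤ)^4, 16*(n:ℤ)^2 - 128*(n:ℤ)^4;
           128*(n:ℤ)^3, 1 + 16*(n:ℤ)^2 - 64*(n:ℤ)^3] := by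
    simp only [u, r, t, _root_.map_mul, map_inv, map_pow, sanov_r, sanov_t,
      Matrix.SpecialLinearGroup.coe_mul, Matrix.SpecialLinearGroup.coe_inv,
      Matrix.SpecialLinearGroup.coe_pow,
      sanovR_coe, sanovT_coe, Tpow, Matrix.adjugate_fin_two_of]
    ext i j
    fin_cases i <;> fin_cases j <;> simp [Matrix.mul_fin_two] <;> ring
  have hUi : (↑((sanov u)⁻¹) : Matrix (Fin 2) (Fin 2) ℤ)
      = !![1 + 16*(n:ℤ)^2 - 64*(n:ℤ)^3, -16*(n:ℤ)^2 + 128*(n:ℤ)^4;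
           -128*(n:ℤ)^3, 1 - 16*(n:ℤ)^2 + 64*(n:ℤ)^3 + 256*(n:ℤ)^4] := by
    rw [Matrix.SpecialLinearGroup.coe_inv, hU, Matrix.adjugate_fin_two_of]
    ext i j
    fin_cases i <;> fin_cases j <;> simp <;> ring
  have hP : (↑(sanov (t ^ k)) : Matrix (Fin 2) (Fin 2) ℤ) = !![1, 2*(n:ℤ); 0, 1] := by
    simp only [t, map_pow, sanov_t, Matrix.SpecialLinearGroup.coe_pow, sanovT_coe, Tpow]
    rfl
  have hPi : (↑((sanov (t ^ k))⁻¹) : Matrix (Fin 2) (Fin 2) ℤ)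
      = !![1, -(2*(n:ℤ)); 0, 1] := by
    rw [Matrix.SpecialLinearGroup.coe_inv, hP, Matrix.adjugate_fin_two_of]
    ext i j
    fin_cases i <;> fin_cases j <;> simp
  -- apply the representation to the relation
  have h2 : sanov u * sanov (t ^ k) * sanov u * (sanov (t ^ k))⁻¹ * (sanov u)⁻¹ *
      sanov (t ^ k) * (sanov u)⁻¹ * (sanov (t ^ k))⁻¹ = 1 := by
    simpa only [_root_.map_mul, map_inv, _root_.map_one] using congrArg sanov hw
  have h3 := congrArg (fun A : Matrix.SpecialLinearGroup (Fin 2) ℤ =>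
    (↑A : Matrix (Fin 2) (Fin 2) ℤ)) h2
  simp only [Matrix.SpecialLinearGroup.coe_mul, Matrix.SpecialLinearGroup.coe_one,
    hU, hUi, hP, hPi] at h3
  have h4 := congrFun (congrFun h3 1) 0
  simp [Matrix.mul_fin_two, Matrix.one_fin_two] at h4
  -- h4 is a polynomial identity in (n:ℤ) that is impossible for n ≥ 1
  nlinarith [pow_pos (by linarith : (0:ℤ) < (n:ℤ)) 7,
    pow_pos (by linarith : (0:ℤ) < (n:ℤ)) 11, sq_nonneg ((n:ℤ))]
end
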